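/- arXiv:2208.04341 — 2 statements merged into one kernel-verified Lean document; each statement's English description precedes it below -/
import Mathlib

section
/- Let ρ₀ = (1/6)·[[2,0,0,0],[0,1,1,0],[0,1,1,0],[0,0,0,2]] and ρ₁ = (1/2)·[[0,0,0,0],[0,1,-1,0],[0,-1,1,0],[0,0,0,0]] be 4×4 complex matrices indexed by Fin 2 × Fin 2. For every matrix Π₀ indexed by Fin 2 × Fin 2 such that Π₀, 1 − Π₀, Π₀^{T_B}, and (1 − Π₀)^{T_B} are all positive semidefinite, the real part of (1/2)·(Tr(Π₀·ρ₀) + Tr((1 − Π₀)·ρ₁)) is at most 5/6. -/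
open Matrix
open scoped ComplexOrder

noncomputable section

/-- Encode a pair of qubits (row/column order 00, 01, 10, 11) as an index in `Fin 4`. -/
def idx4 : Fin 2 × Fin 2 → Fin 4 :=
  fun p => ⟨2 * p.1.val + p.2.val, by have := p.1.isLt; have := p.2.isLt; omega⟩

/-- Uniform mixture of the three symmetric Bell states. -/
def ρ₀ : Matrix (Fin 2 × Fin 2) (Fin 2 × Fin 2) ℂ :=
  (1/6 : ℂ) • Matrix.of fun p q =>
    (!![2,0,0,0; 0,1,1,0; 0,1,1,0; 0,0,0,2] : Matrix (Fin 4) (Fin 4) ℂ) (idx4 p) (idx4 q)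

/-- The antisymmetric Bell state. -/
def ρ₁ : Matrix (Fin 2 × Fin 2) (Fin 2 × Fin 2) ℂ :=
  (1/2 : ℂ) • Matrix.of fun p q =>
    (!![0,0,0,0; 0,1,-1,0; 0,-1,1,0; 0,0,0,0] : Matrix (Fin 4) (Fin 4) ℂ) (idx4 p) (idx4 q)

/-- Partial transpose on the second qubit: `M^{T_B}((i,j),(k,l)) = M((i,l),(k,j))`. -/
def ptB (M : Matrix (Fin 2 × Fin 2) (Fin 2 × Fin 2) ℂ) :
    Matrix (Fin 2 × Fin 2) (Fin 2 × Fin 2) ℂ :=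
  Matrix.of fun p q => M (p.1, q.2) (q.1, p.2)

/-! Since `ρ₀ = (1 - ρ₁) / 3`, the success probability equals `1/2 + Tr Π₀ / 6 - 2/3 · Tr(Π₀ ρ₁)`.
Testing `Π₀ ≥ 0` on the singlet gives `Tr(Π₀ ρ₁) ≥ 0`, and testing `(1 - Π₀)^{T_B} ≥ 0` on the
unnormalised maximally entangled vector gives `Tr((1 - Π₀) · SWAP) ≥ 0`, because the partial
transpose of that projector is the swap operator `SWAP = 1 - 2ρ₁`. Adding the two inequalities with
weights `1/3` and `1/6` gives exactly the bound `5/6`. -/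

theorem Matrix.PosSemidef.trace_mul_vecMulVec_star_nonneg {n R : Type*} [Fintype n] [CommRing R]
    [PartialOrder R] [StarRing R] {A : Matrix n n R} (hA : A.PosSemidef) (v : n → R) :
    0 ≤ (A * vecMulVec v (star v)).trace := by
  rw [mul_vecMulVec, trace_vecMulVec, dotProduct_comm]
  exact hA.dotProduct_mulVec_nonneg v

theorem trace_ptB_mul (A B : Matrix (Fin 2 × Fin 2) (Fin 2 × Fin 2) ℂ) :
    (ptB A * B).trace = (A * ptB B).trace := by
  simp only [trace, diag, mul_apply, ptB, of_apply, Fintype.sum_prod_type]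
  refine Finset.sum_congr rfl fun i _ => ?_
  conv_lhs => enter [2, l]; rw [Finset.sum_comm]
  rw [Finset.sum_comm]
  conv_lhs => enter [2, j]; rw [Finset.sum_comm]

def singletVec : Fin 2 × Fin 2 → ℂ := fun p => ![![0, 1], ![-1, 0]] p.1 p.2

def maxEntVec : Fin 2 × Fin 2 → ℂ := fun p => if p.1 = p.2 then 1 else 0

theorem ρ₁_eq : ρ₁ = (1/2 : ℂ) • vecMulVec singletVec (star singletVec) := by
  ext ⟨i, j⟩ ⟨k, l⟩
  fin_cases i <;> fin_cases j <;> fin_cases k <;> fin_cases l <;>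
    simp [ρ₁, idx4, singletVec, vecMulVec]

theorem ρ₀_eq : ρ₀ = (1/3 : ℂ) • (1 - ρ₁) := by
  ext ⟨i, j⟩ ⟨k, l⟩
  fin_cases i <;> fin_cases j <;> fin_cases k <;> fin_cases l <;>
    norm_num [ρ₀, ρ₁, idx4, one_apply]

theorem ptB_vecMulVec_maxEntVec :
    ptB (vecMulVec maxEntVec (star maxEntVec)) = 1 - (2 : ℂ) • ρ₁ := by
  ext ⟨i, j⟩ ⟨k, l⟩
  fin_cases i <;> fin_cases j <;> fin_cases k <;> fin_cases l <;>
    simp [ptB, ρ₁, idx4, maxEntVec, vecMulVec, one_apply]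

theorem trace_ρ₁ : ρ₁.trace = 1 := by
  norm_num [ρ₁, idx4, trace, Fintype.sum_prod_type]

theorem success_prob_eq (P : Matrix (Fin 2 × Fin 2) (Fin 2 × Fin 2) ℂ) :
    (1/2 : ℂ) * ((P * ρ₀).trace + ((1 - P) * ρ₁).trace) =
      5/6 - (1/6) * ((1 - P) * (1 - (2 : ℂ) • ρ₁)).trace - (1/3) * (P * ρ₁).trace := by
  rw [ρ₀_eq]
  simp only [mul_sub, sub_mul, mul_one, one_mul, mul_smul_comm, trace_sub, trace_smul,
    trace_one, trace_ρ₁, smul_eq_mul, Fintype.card_prod, Fintype.card_fin]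
  push_cast
  ring

/-- Any PPT measurement `(Π₀, 1 - Π₀)` discriminates the random symmetric state from the
antisymmetric state with success probability at most `5/6`. -/
theorem ppt_bound_single_round :
    ∀ P₀ : Matrix (Fin 2 × Fin 2) (Fin 2 × Fin 2) ℂ,
      P₀.PosSemidef → (1 - P₀).PosSemidef →
      (ptB P₀).PosSemidef → (ptB (1 - P₀)).PosSemidef →
      ((1/2 : ℂ) * ((P₀ * ρ₀).trace + ((1 - P₀) * ρ₁).trace)).re ≤ 5/6 := by
  intro P₀ hP₀ _ _ hptB₁
  have h_singlet : 0 ≤ (P₀ * ρ₁).trace := by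
    rw [ρ₁_eq, mul_smul_comm, trace_smul, smul_eq_mul]
    exact mul_nonneg (by positivity) (hP₀.trace_mul_vecMulVec_star_nonneg singletVec)
  have h_swap : 0 ≤ ((1 - P₀) * (1 - (2 : ℂ) • ρ₁)).trace := by
    rw [← ptB_vecMulVec_maxEntVec, ← trace_ptB_mul]
    exact hptB₁.trace_mul_vecMulVec_star_nonneg maxEntVec
  have h_le : (1/2 : ℂ) * ((P₀ * ρ₀).trace + ((1 - P₀) * ρ₁).trace) ≤ 5/6 := by
    rw [success_prob_eq]
    linear_combination (1/6 : ℂ) * h_swap + (1/3 : ℂ) * h_singlet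
  simpa using Complex.re_le_re h_le
end
end

section
/- Let ρ₀ = (1/6)·[[2,0,0,0],[0,1,1,0],[0,1,1,0],[0,0,0,2]] and ρ₁ = (1/2)·[[0,0,0,0],[0,1,-1,0],[0,-1,1,0],[0,0,0,0]] be 4×4 complex matrices indexed by Fin 2 × Fin 2. Then the matrix Q₁ = (1/18)·(9·(ρ₀^{T_B} ⊗ₖ ρ₀^{T_B}) − (ρ₁^{T_B} ⊗ₖ ρ₁^{T_B})) is positive semidefinite. -/
open Matrix
open scoped Kronecker ComplexOrder

noncomputable section

/-!
Both partial transposes are affine in the unnormalised projector `E = |Φ⁺⟩⟨Φ⁺|`,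
`Φ⁺ = |00⟩ + |11⟩`: `ρ₀^{T_B} = (1 + E)/6` and `ρ₁^{T_B} = (1 - E)/2`. Hence
`Q₁ = ((1 + E) ⊗ (1 + E) - (1 - E) ⊗ (1 - E))/72 = (1 ⊗ E + E ⊗ 1)/36`,
a nonnegative combination of Kronecker products of positive semidefinite matrices.
-/

namespace Matrix

theorem add_kronecker_add_sub_sub_kronecker_sub {m n R : Type*} [CommRing R]
    (A B : Matrix m n R) :
    (A + B) ⊗ₖ (A + B) - (A - B) ⊗ₖ (A - B) = (2 : R) • (A ⊗ₖ B + B ⊗ₖ A) := by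
  ext i j
  simp only [sub_apply, add_apply, smul_apply, kroneckerMap_apply, smul_eq_mul]
  ring

end Matrix

def phiPlus : Fin 2 × Fin 2 → ℂ := fun p => if p.1 = p.2 then 1 else 0

def bellProj : Matrix (Fin 2 × Fin 2) (Fin 2 × Fin 2) ℂ := vecMulVec phiPlus (star phiPlus)

theorem bellProj_posSemidef : bellProj.PosSemidef := posSemidef_vecMulVec_self_star phiPlus

theorem ptB_ρ₀ : ptB ρ₀ = (1/6 : ℂ) • (1 + bellProj) := by
  ext ⟨a, b⟩ ⟨c, d⟩
  fin_cases a <;> fin_cases b <;> fin_cases c <;> fin_cases d <;>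
    simp [ptB, ρ₀, idx4, bellProj, phiPlus, vecMulVec_apply, one_apply] <;> norm_num

theorem ptB_ρ₁ : ptB ρ₁ = (1/2 : ℂ) • (1 - bellProj) := by
  ext ⟨a, b⟩ ⟨c, d⟩
  fin_cases a <;> fin_cases b <;> fin_cases c <;> fin_cases d <;>
    simp [ptB, ρ₁, idx4, bellProj, phiPlus, vecMulVec_apply, one_apply]

theorem Q₁_eq_kronecker_bellProj :
    (1/18 : ℂ) • ((9 : ℂ) • (ptB ρ₀ ⊗ₖ ptB ρ₀) - (ptB ρ₁ ⊗ₖ ptB ρ₁)) =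
      (1/36 : ℂ) • (1 ⊗ₖ bellProj + bellProj ⊗ₖ 1) := by
  calc _ = (1/72 : ℂ) •
          ((1 + bellProj) ⊗ₖ (1 + bellProj) - (1 - bellProj) ⊗ₖ (1 - bellProj)) := by
        simp only [ptB_ρ₀, ptB_ρ₁, smul_kronecker, kronecker_smul, smul_smul]
        module
    _ = _ := by
        rw [add_kronecker_add_sub_sub_kronecker_sub]
        module

/-- The dual variable `Q₁` of the two-round SDP is positive semidefinite. -/
theorem Q₁_posSemidef :
    ((1/18 : ℂ) • ((9 : ℂ) • (ptB ρ₀ ⊗ₖ ptB ρ₀) - (ptB ρ₁ ⊗ₖ ptB ρ₁))).PosSemidef := by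
  rw [Q₁_eq_kronecker_bellProj]
  exact ((PosSemidef.one.kronecker bellProj_posSemidef).add
    (bellProj_posSemidef.kronecker PosSemidef.one)).smul (by positivity)
end
end
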